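/- arXiv:math-ph/9902017 — 2 statements merged into one kernel-verified Lean document; each statement's English description precedes it below -/
import Mathlib

section
/- Entropy decomposition: let n ≥ 1 and let ψ ∈ ℂ^(n+1) be a unit vector represented by the sphere points ω_1, …, ω_n with constant c > 0. Then the Wehrl entropy satisfies S_W(ψ) = −(n+1) Σ_{i=1}^n ∫ |⟨v_n(Ω), ψ⟩|² ln |⟨v_1(Ω), v_1(ω_i)⟩|² dΩ/4π − ln c. -/
open MeasureTheory

/-- The Bloch coherent state of spin `n/2` with parameters `Ω = (p, φ)`:
components `(v_n(Ω))_k = √(binom n k) · p^(k/2) · (1-p)^((n-k)/2) · exp(-i k φ)`. -/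
noncomputable def bloch (n : ℕ) (Ω : ℝ × ℝ) : EuclideanSpace ℂ (Fin (n + 1)) :=
  WithLp.toLp 2 fun k => (↑(Real.sqrt (n.choose k) * Real.sqrt Ω.1 ^ (k : ℕ) *
      Real.sqrt (1 - Ω.1) ^ (n - (k : ℕ))) : ℂ) *
    Complex.exp (-((k : ℕ) : ℂ) * Complex.I * (Ω.2 : ℂ))

/-- A sphere point: `(p, φ) ∈ [0,1] × [0, 2π)`. -/
def IsSpherePt (Ω : ℝ × ℝ) : Prop :=
  Ω.1 ∈ Set.Icc (0 : ℝ) 1 ∧ Ω.2 ∈ Set.Ico (0 : ℝ) (2 * Real.pi)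

/-- The overlap `⟨v_n(Ω), ψ⟩` (inner product conjugate-linear in the first argument). -/
noncomputable def ov (n : ℕ) (Ω : ℝ × ℝ) (ψ : EuclideanSpace ℂ (Fin (n + 1))) : ℂ :=
  inner ℂ (bloch n Ω) ψ

/-- Normalized integral over the sphere: `∫ f(Ω) dΩ/4π = ∫_0^1 ∫_0^{2π} f(p,φ) dφ/(2π) dp`. -/
noncomputable def sphereInt (f : ℝ × ℝ → ℝ) : ℝ :=
  ∫ p in (0 : ℝ)..1, (∫ φ in (0 : ℝ)..(2 * Real.pi), f (p, φ)) / (2 * Real.pi)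

/-- The Wehrl entropy of a state `ψ ∈ ℂ^(n+1)`. -/
noncomputable def wehrl (n : ℕ) (ψ : EuclideanSpace ℂ (Fin (n + 1))) : ℝ :=
  -((n : ℝ) + 1) * sphereInt (fun Ω => ‖ov n Ω ψ‖ ^ 2 * Real.log (‖ov n Ω ψ‖ ^ 2))

/-- `ψ` is represented by the `n` sphere points `ω 1, …, ω n` with constant `c`:
`|⟨v_n(Ω), ψ⟩|² = c · ∏ k, |⟨v_1(Ω), v_1(ω k)⟩|²` for every sphere point `Ω`. -/
def Represents (n : ℕ) (ψ : EuclideanSpace ℂ (Fin (n + 1))) (ω : Fin n → ℝ × ℝ) (c : ℝ) :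
    Prop :=
  (∀ k, IsSpherePt (ω k)) ∧
    ∀ Ω, IsSpherePt Ω → ‖ov n Ω ψ‖ ^ 2 = c * ∏ k : Fin n, ‖ov 1 Ω (bloch 1 (ω k))‖ ^ 2

/-- Squared chordal distance between two sphere points (sphere of radius 1/2):
`d(ω, ω') = 1 - |⟨v_1(ω), v_1(ω')⟩|²`. -/
noncomputable def chord (ω ω' : ℝ × ℝ) : ℝ := 1 - ‖ov 1 ω (bloch 1 ω')‖ ^ 2

/-- `ψ` is a coherent state, i.e. `ψ = e^{iθ} v_n(Ω)` for some `θ` and some sphere point `Ω`. -/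
def IsCoherent (n : ℕ) (ψ : EuclideanSpace ℂ (Fin (n + 1))) : Prop :=
  ∃ (θ : ℝ) (Ω : ℝ × ℝ), IsSpherePt Ω ∧ ψ = Complex.exp ((θ : ℂ) * Complex.I) • bloch n Ω

/-!
On the sphere `F(Ω) = |⟨v_n(Ω), ψ⟩|²` equals `c ∏ᵢ gᵢ(Ω)` with `gᵢ(Ω) = |⟨v_1(Ω), v_1(ωᵢ)⟩|²`,
so pointwise `F ln F = F ln c + ∑ᵢ F ln gᵢ` (both sides vanish where `F` does). Each
`F ln gᵢ = c (gᵢ ln gᵢ) ∏_{j ≠ i} gⱼ` is continuous, so the sphere integral splits termwise, and the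
`ln c` term contributes `ln c · ∫ F = ln c / (n + 1)`: the resolution of identity
`∫ |⟨v_n(Ω), ψ⟩|² dΩ/4π = ‖ψ‖² / (n + 1)` follows from Parseval for trigonometric polynomials in `φ`
and the Beta integral in `p`.
-/

open Real
open scoped Nat

lemma integral_pow_mul_one_sub_pow (k m : ℕ) :
    ∫ x in (0 : ℝ)..1, x ^ k * (1 - x) ^ m = (k ! : ℝ) * m ! / (k + m + 1)! := by
  have hbeta := Complex.betaIntegral_eq_Gamma_mul_div (k + 1) (m + 1)
    (by simp; positivity) (by simp; positivity)
  rw [show (k + 1 : ℂ) + (m + 1) = ((k + m + 1 : ℕ) : ℂ) + 1 by push_cast; ring,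
    Complex.Gamma_nat_eq_factorial, Complex.Gamma_nat_eq_factorial,
    Complex.Gamma_nat_eq_factorial, Complex.betaIntegral] at hbeta
  have hcast : ((∫ x in (0 : ℝ)..1, x ^ k * (1 - x) ^ m : ℝ) : ℂ) =
      ((k ! * m ! / (k + m + 1)! : ℝ) : ℂ) := by
    push_cast
    rw [← intervalIntegral.integral_ofReal, ← hbeta]
    exact intervalIntegral.integral_congr fun x _ => by simp [Complex.cpow_natCast]
  exact_mod_cast hcast

lemma integral_exp_int_mul_I (m : ℤ) :
    ∫ t in (0 : ℝ)..2 * π, Complex.exp (m * Complex.I * t) =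
      if m = 0 then (2 * π : ℂ) else 0 := by
  split_ifs with hm
  · simp [hm]
  have hc : (m : ℂ) * Complex.I ≠ 0 := mul_ne_zero (by exact_mod_cast hm) Complex.I_ne_zero
  have hper : Complex.exp (m * Complex.I * (2 * π)) = 1 := by
    rw [← Complex.exp_int_mul_two_pi_mul_I m]
    ring_nf
  simp [integral_exp_mul_complex hc, hper]

lemma integral_norm_sum_exp_sq {ι : Type*} [Fintype ι] {f : ι → ℤ}
    (hf : Function.Injective f) (a : ι → ℂ) :
    ∫ t in (0 : ℝ)..2 * π, ‖∑ i, a i * Complex.exp (f i * Complex.I * t)‖ ^ 2 =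
      2 * π * ∑ i, ‖a i‖ ^ 2 := by
  classical
  have hexpand : ∀ t : ℝ, ((‖∑ i, a i * Complex.exp (f i * Complex.I * t)‖ ^ 2 : ℝ) : ℂ) =
      ∑ i, ∑ j, (starRingEnd ℂ) (a i) * a j * Complex.exp ((f j - f i : ℤ) * Complex.I * t) := by
    intro t
    rw [Complex.ofReal_pow, ← Complex.conj_mul', map_sum, Finset.sum_mul_sum]
    refine Finset.sum_congr rfl fun i _ => Finset.sum_congr rfl fun j _ => ?_
    rw [map_mul, ← Complex.exp_conj, mul_mul_mul_comm, ← Complex.exp_add]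
    simp only [map_mul, map_intCast, Complex.conj_I, Complex.conj_ofReal]
    push_cast
    ring_nf
  have hint : ∀ i j, ∫ t in (0 : ℝ)..2 * π,
      (starRingEnd ℂ) (a i) * a j * Complex.exp ((f j - f i : ℤ) * Complex.I * t) =
        if i = j then (2 * π * ‖a i‖ ^ 2 : ℂ) else 0 := by
    intro i j
    rw [intervalIntegral.integral_const_mul, integral_exp_int_mul_I]
    rcases eq_or_ne i j with rfl | h
    · simp only [sub_self, if_true, Complex.conj_mul']
      ring
    · simp [sub_eq_zero, hf.ne h.symm, h]
  have hcont : ∀ i j, Continuous fun t : ℝ =>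
      (starRingEnd ℂ) (a i) * a j * Complex.exp ((f j - f i : ℤ) * Complex.I * t) :=
    fun i j => by fun_prop
  have hcast :
      ((∫ t in (0 : ℝ)..2 * π, ‖∑ i, a i * Complex.exp (f i * Complex.I * t)‖ ^ 2 : ℝ) : ℂ) =
        ((2 * π * ∑ i, ‖a i‖ ^ 2 : ℝ) : ℂ) := by
    rw [← intervalIntegral.integral_ofReal]
    simp_rw [hexpand]
    rw [intervalIntegral.integral_finsetSum fun i _ =>
      (continuous_finsetSum _ fun j _ => hcont i j).intervalIntegrable _ _]
    simp_rw [intervalIntegral.integral_finsetSum fun j _ => (hcont _ j).intervalIntegrable _ _]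
    simp only [hint, Finset.sum_ite_eq, Finset.mem_univ, if_true, Finset.mul_sum]
    push_cast
    ring
  exact_mod_cast hcast

lemma mul_log_mul_prod {ι : Type*} (s : Finset ι) (c : ℝ) (g : ι → ℝ) :
    (c * ∏ i ∈ s, g i) * log (c * ∏ i ∈ s, g i) =
      log c * (c * ∏ i ∈ s, g i) + ∑ i ∈ s, (c * ∏ j ∈ s, g j) * log (g i) := by
  by_cases hF : c * ∏ i ∈ s, g i = 0
  · simp [hF]
  obtain ⟨hc, hg⟩ := mul_ne_zero_iff.mp hF
  rw [log_mul hc hg, log_prod fun i hi => Finset.prod_ne_zero_iff.mp hg i hi, mul_add,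
    Finset.mul_sum, mul_comm]

lemma continuous_mul_prod_mul_log {X ι : Type*} [TopologicalSpace X] {s : Finset ι} {i : ι}
    (hi : i ∈ s) (c : ℝ) {g : ι → X → ℝ} (hg : ∀ j ∈ s, Continuous (g j)) :
    Continuous fun x => (c * ∏ j ∈ s, g j x) * log (g i x) := by
  classical
  have hsplit : (fun x => (c * ∏ j ∈ s, g j x) * log (g i x)) =
      fun x => c * (g i x * log (g i x)) * ∏ j ∈ s.erase i, g j x := by
    funext x
    rw [← Finset.mul_prod_erase s _ hi]
    ring
  rw [hsplit]
  exact (continuous_const.mul (continuous_mul_log.comp (hg i hi))).mul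
    (continuous_finsetProd _ fun j hj => hg j (Finset.mem_of_mem_erase hj))

lemma sphereInt_congr {f g : ℝ × ℝ → ℝ} (h : ∀ Ω, IsSpherePt Ω → f Ω = g Ω) :
    sphereInt f = sphereInt g := by
  refine intervalIntegral.integral_congr fun p hp => ?_
  rw [Set.uIcc_of_le zero_le_one] at hp
  congr 1
  refine intervalIntegral.integral_congr_ae ?_
  -- the endpoint `t = 2π` is not a sphere point, but it is null
  filter_upwards [Measure.ae_ne volume (2 * π)] with t ht hmem
  rw [Set.uIoc_of_le (by positivity)] at hmem
  exact h (p, t) ⟨hp, hmem.1.le, hmem.2.lt_of_ne ht⟩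

lemma sphereInt_const_mul (a : ℝ) (f : ℝ × ℝ → ℝ) :
    sphereInt (fun Ω => a * f Ω) = a * sphereInt f := by
  rw [sphereInt, sphereInt, ← intervalIntegral.integral_const_mul]
  refine intervalIntegral.integral_congr fun p _ => ?_
  rw [intervalIntegral.integral_const_mul, mul_div_assoc]

lemma continuous_integral_phi {f : ℝ × ℝ → ℝ} (hf : Continuous f) :
    Continuous fun p => ∫ t in (0 : ℝ)..2 * π, f (p, t) :=
  intervalIntegral.continuous_parametric_intervalIntegral_of_continuous'
    (f := fun p t => f (p, t)) (by fun_prop) _ _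

lemma sphereInt_add {f g : ℝ × ℝ → ℝ} (hf : Continuous f) (hg : Continuous g) :
    sphereInt (fun Ω => f Ω + g Ω) = sphereInt f + sphereInt g := by
  rw [sphereInt, sphereInt, sphereInt, ← intervalIntegral.integral_add
    (((continuous_integral_phi hf).div_const _).intervalIntegrable _ _)
    (((continuous_integral_phi hg).div_const _).intervalIntegrable _ _)]
  refine intervalIntegral.integral_congr fun p _ => ?_
  rw [intervalIntegral.integral_add
    ((by fun_prop : Continuous fun t => f (p, t)).intervalIntegrable _ _)
    ((by fun_prop : Continuous fun t => g (p, t)).intervalIntegrable _ _), add_div]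

lemma sphereInt_sum {ι : Type*} (s : Finset ι) {f : ι → ℝ × ℝ → ℝ}
    (hf : ∀ i ∈ s, Continuous (f i)) :
    sphereInt (fun Ω => ∑ i ∈ s, f i Ω) = ∑ i ∈ s, sphereInt (f i) := by
  classical
  induction s using Finset.induction with
  | empty => simp [sphereInt]
  | insert a s ha ih =>
    rw [Finset.forall_mem_insert] at hf
    simp only [Finset.sum_insert ha]
    rw [sphereInt_add hf.1 (continuous_finsetSum _ hf.2), ih hf.2]

noncomputable def blochAmp (n k : ℕ) (p : ℝ) : ℝ :=
  √(n.choose k) * √p ^ k * √(1 - p) ^ (n - k)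

@[fun_prop]
lemma continuous_blochAmp (n k : ℕ) : Continuous (blochAmp n k) := by
  unfold blochAmp
  fun_prop

lemma ov_eq_sum_exp (n : ℕ) (ψ : EuclideanSpace ℂ (Fin (n + 1))) (p t : ℝ) :
    ov n (p, t) ψ =
      ∑ k : Fin (n + 1), (blochAmp n k p * ψ k) * Complex.exp (((k : ℕ) : ℤ) * Complex.I * t) := by
  simp only [ov, bloch, blochAmp, PiLp.inner_apply, RCLike.inner_apply, map_mul,
    Complex.conj_ofReal]
  refine Finset.sum_congr rfl fun k _ => ?_
  rw [← Complex.exp_conj]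
  simp only [map_mul, map_neg, map_natCast, Complex.conj_I, Complex.conj_ofReal, Int.cast_natCast]
  ring_nf

lemma continuous_bloch (n : ℕ) : Continuous (bloch n) :=
  (PiLp.continuous_toLp 2 _).comp (continuous_pi fun k => by fun_prop)

lemma continuous_norm_ov_sq (n : ℕ) (ψ : EuclideanSpace ℂ (Fin (n + 1))) :
    Continuous fun Ω => ‖ov n Ω ψ‖ ^ 2 :=
  ((continuous_bloch n).inner continuous_const).norm.pow 2

lemma blochAmp_sq {n k : ℕ} {p : ℝ} (hp : p ∈ Set.Icc 0 1) :
    blochAmp n k p ^ 2 = n.choose k * (p ^ k * (1 - p) ^ (n - k)) := by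
  rw [blochAmp, mul_pow, mul_pow, pow_right_comm, pow_right_comm √(1 - p), Real.sq_sqrt hp.1,
    Real.sq_sqrt (sub_nonneg.2 hp.2), Real.sq_sqrt (Nat.cast_nonneg _), mul_assoc]

lemma integral_blochAmp_sq {n k : ℕ} (hk : k ≤ n) :
    ∫ p in (0 : ℝ)..1, blochAmp n k p ^ 2 = 1 / (n + 1) := by
  rw [intervalIntegral.integral_congr fun p hp =>
      blochAmp_sq (by rwa [Set.uIcc_of_le zero_le_one] at hp),
    intervalIntegral.integral_const_mul, integral_pow_mul_one_sub_pow, Nat.add_sub_cancel' hk,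
    Nat.cast_choose ℝ hk, Nat.factorial_succ]
  push_cast
  field_simp

lemma integral_norm_ov_sq_phi (n : ℕ) (ψ : EuclideanSpace ℂ (Fin (n + 1))) (p : ℝ) :
    ∫ t in (0 : ℝ)..2 * π, ‖ov n (p, t) ψ‖ ^ 2 =
      2 * π * ∑ k : Fin (n + 1), blochAmp n k p ^ 2 * ‖ψ k‖ ^ 2 := by
  simp_rw [ov_eq_sum_exp]
  rw [integral_norm_sum_exp_sq (f := fun k : Fin (n + 1) => ((k : ℕ) : ℤ))
    (fun i j h => Fin.ext (by simpa using h))]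
  simp [mul_pow]

lemma sphereInt_norm_ov_sq (n : ℕ) (ψ : EuclideanSpace ℂ (Fin (n + 1))) :
    sphereInt (fun Ω => ‖ov n Ω ψ‖ ^ 2) = ‖ψ‖ ^ 2 / (n + 1) := by
  have hpi : 2 * π ≠ 0 := by positivity
  simp only [sphereInt, integral_norm_ov_sq_phi, mul_div_cancel_left₀ _ hpi]
  rw [intervalIntegral.integral_finsetSum fun (k : Fin (n + 1)) _ =>
    (by fun_prop : Continuous fun p => blochAmp n k p ^ 2 * ‖ψ k‖ ^ 2).intervalIntegrable _ _]
  simp_rw [intervalIntegral.integral_mul_const, integral_blochAmp_sq (Fin.is_le _),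
    EuclideanSpace.norm_sq_eq, Finset.sum_div]
  ring_nf

theorem wehrl_decomposition_general (n : ℕ)
    (ψ : EuclideanSpace ℂ (Fin (n + 1))) (hψ : ‖ψ‖ = 1)
    (ω : Fin n → ℝ × ℝ) (c : ℝ) (hrep : Represents n ψ ω c) :
    wehrl n ψ =
      -((n : ℝ) + 1) *
          (∑ i : Fin n,
            sphereInt (fun Ω => ‖ov n Ω ψ‖ ^ 2 * Real.log (‖ov 1 Ω (bloch 1 (ω i))‖ ^ 2)))
        - Real.log c := by
  obtain ⟨-, hrep⟩ := hrep
  set g : Fin n → ℝ × ℝ → ℝ := fun i Ω => ‖ov 1 Ω (bloch 1 (ω i))‖ ^ 2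
  have hg : ∀ i ∈ Finset.univ, Continuous (g i) := fun i _ => continuous_norm_ov_sq 1 _
  have hnorm : sphereInt (fun Ω => c * ∏ i, g i Ω) = 1 / (n + 1) := by
    rw [← sphereInt_congr hrep, sphereInt_norm_ov_sq, hψ, one_pow]
  have hlog : ∀ i, sphereInt (fun Ω => ‖ov n Ω ψ‖ ^ 2 * log (g i Ω)) =
      sphereInt (fun Ω => (c * ∏ j, g j Ω) * log (g i Ω)) :=
    fun i => sphereInt_congr fun Ω hΩ => by rw [hrep Ω hΩ]
  calc wehrl n ψ
      = -(n + 1) * sphereInt (fun Ω => (c * ∏ i, g i Ω) * log (c * ∏ i, g i Ω)) :=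
        congrArg _ (sphereInt_congr fun Ω hΩ => by rw [hrep Ω hΩ])
    _ = -(n + 1) * (log c * sphereInt (fun Ω => c * ∏ i, g i Ω) +
          ∑ i, sphereInt (fun Ω => (c * ∏ j, g j Ω) * log (g i Ω))) := by
        simp_rw [mul_log_mul_prod]
        rw [sphereInt_add (f := fun Ω => log c * (c * ∏ i, g i Ω))
            (continuous_const.mul (continuous_const.mul (continuous_finsetProd _ hg)))
            (continuous_finsetSum _ fun i hi => continuous_mul_prod_mul_log hi c hg),
          sphereInt_const_mul,
          sphereInt_sum _ fun i hi => continuous_mul_prod_mul_log hi c hg]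
    _ = _ := by
        rw [hnorm, Finset.sum_congr rfl fun i _ => (hlog i).symm]
        field_simp
        ring

/-- Entropy decomposition for a represented state. -/
theorem wehrl_decomposition (n : ℕ) (hn : 1 ≤ n)
    (ψ : EuclideanSpace ℂ (Fin (n + 1))) (hψ : ‖ψ‖ = 1)
    (ω : Fin n → ℝ × ℝ) (c : ℝ) (hc : 0 < c) (hrep : Represents n ψ ω c) :
    wehrl n ψ =
      -((n : ℝ) + 1) *
          (∑ i : Fin n,
            sphereInt (fun Ω => ‖ov n Ω ψ‖ ^ 2 * Real.log (‖ov 1 Ω (bloch 1 (ω i))‖ ^ 2)))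
        - Real.log c :=
  wehrl_decomposition_general n ψ hψ ω c hrep
end

section
/- Let ε, μ, ν ∈ [0,1] with ε + μ + ν < 3, and set x = (ε+μ+ν)/3 and c = 1/(1−x). Then c·( x − (εμ+εν+μν)/6 ) − ln c ≥ 0, with equality if and only if ε = μ = ν = 0. -/
open MeasureTheory

/-! Since `sinh t ≥ t` for `t ≥ 0`, with equality only at `0`, evaluating at `t = log c` gives
`log c ≤ (c - c⁻¹) / 2` for `c ≥ 1`, strictly for `c > 1`. With `x = 1 - c⁻¹` the expression
splits as `((c - c⁻¹) / 2 - log c) + c (x² / 2 - (εμ + εν + μν) / 6)`: the first summand is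
`c (x - x² / 2) - log c`, and the second is nonnegative because `εμ + εν + μν ≤ 3x²`. -/

namespace Real

theorem log_le_half_sub_inv_iff {c : ℝ} (hc : 0 < c) : log c ≤ (c - c⁻¹) / 2 ↔ 1 ≤ c := by
  rw [← sinh_log hc, self_le_sinh_iff, log_nonneg_iff hc]

theorem log_lt_half_sub_inv_iff {c : ℝ} (hc : 0 < c) : log c < (c - c⁻¹) / 2 ↔ 1 < c := by
  rw [← sinh_log hc, self_lt_sinh_iff, log_pos_iff hc.le]

end Real

theorem mul_add_mul_add_mul_le_sq_div_three {R : Type*} [Field R] [LinearOrder R]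
    [IsStrictOrderedRing R] (a b c : R) : a * b + a * c + b * c ≤ (a + b + c) ^ 2 / 3 := by
  rw [le_div_iff₀ three_pos]
  nlinarith [sq_nonneg (a - b), sq_nonneg (a - c), sq_nonneg (b - c)]

/-- The scalar inequality underlying the proof of Lieb's conjecture for spin 3/2. -/
theorem scalar_inequality_spin_three_halves (ε μ ν x c : ℝ)
    (hε : ε ∈ Set.Icc (0 : ℝ) 1) (hμ : μ ∈ Set.Icc (0 : ℝ) 1) (hν : ν ∈ Set.Icc (0 : ℝ) 1)
    (hsum : ε + μ + ν < 3) (hx : x = (ε + μ + ν) / 3) (hc : c = 1 / (1 - x)) :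
    0 ≤ c * (x - (ε * μ + ε * ν + μ * ν) / 6) - Real.log c ∧
      (c * (x - (ε * μ + ε * ν + μ * ν) / 6) - Real.log c = 0 ↔ ε = 0 ∧ μ = 0 ∧ ν = 0) := by
  obtain ⟨hε0, -⟩ := hε
  obtain ⟨hμ0, -⟩ := hμ
  obtain ⟨hν0, -⟩ := hν
  have hx1 : 0 < 1 - x := by rw [hx]; linarith
  have hc0 : 0 < c := by rw [hc]; positivity
  have hsplit : c * (x - (ε * μ + ε * ν + μ * ν) / 6) - Real.log c =
      ((c - c⁻¹) / 2 - Real.log c) + c * (x ^ 2 / 2 - (ε * μ + ε * ν + μ * ν) / 6) := by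
    rw [hc]; field_simp; ring
  have hsym : 0 ≤ c * (x ^ 2 / 2 - (ε * μ + ε * ν + μ * ν) / 6) := by
    have := mul_add_mul_add_mul_le_sq_div_three ε μ ν
    refine mul_nonneg hc0.le ?_
    rw [hx]; linarith
  have hc1 : 1 ≤ c := by rw [hc, one_le_div hx1, hx]; linarith
  have hlog := sub_nonneg.2 ((Real.log_le_half_sub_inv_iff hc0).2 hc1)
  refine ⟨by linarith, fun h => ?_, ?_⟩
  · have hc_not_one_lt : ¬ 1 < c := fun h1 => by
      linarith [(Real.log_lt_half_sub_inv_iff hc0).2 h1]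
    rw [hc, one_lt_div hx1, hx] at hc_not_one_lt
    refine ⟨?_, ?_, ?_⟩ <;> linarith
  · rintro ⟨rfl, rfl, rfl⟩
    obtain rfl : x = 0 := by rw [hx]; ring
    obtain rfl : c = 1 := by rw [hc]; norm_num
    simp
end
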